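/- For any J ∈ ℝ^𝒳 and any initial distribution η on 𝒳, the performance loss of the greedy policy μ_J satisfies ||J_{μ_J} − J*||_{1,η} ≤ (1/(1−α)) ( ν(η,J)^⊤(J* − J) + (2/(1−α)) π_{μ*,ν(η,J)}^⊤ (J − TJ)^+ ), where (J − TJ)^+ denotes the componentwise positive part. -/

import Mathlib

open Finset Matrix

noncomputable section

/-- The Bellman operator. -/
def bellmanT {X A : Type*} [Fintype X] [Fintype A] [Nonempty A]
    (g : X → A → ℝ) (P : A → X → X → ℝ) (α : ℝ) (J : X → ℝ) : X → ℝ :=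
  fun x => Finset.univ.inf' Finset.univ_nonempty fun a => g x a + α * ∑ x', P a x x' * J x'

/-- The Bellman operator of a stationary policy. -/
def polT {X A : Type*} [Fintype X]
    (g : X → A → ℝ) (P : A → X → X → ℝ) (α : ℝ) (μ : X → A) (J : X → ℝ) : X → ℝ :=
  fun x => g x (μ x) + α * ∑ x', P (μ x) x x' * J x'

/-- Transition matrix of a stationary policy. -/
def polMat {X A : Type*} (P : A → X → X → ℝ) (μ : X → A) : Matrix X X ℝ :=
  Matrix.of fun x x' => P (μ x) x x'

/-- Δ_μ = Σ_k (α P_μ)^k = (I - α P_μ)⁻¹. -/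
def deltaMat {X A : Type*} [Fintype X] [DecidableEq X]
    (P : A → X → X → ℝ) (α : ℝ) (μ : X → A) : Matrix X X ℝ :=
  ∑' k : ℕ, (α • polMat P μ) ^ k

/-- π_{μ,ν} = (1-α) ν^⊤ (I - α P_μ)⁻¹. -/
def piDist {X A : Type*} [Fintype X] [DecidableEq X]
    (P : A → X → X → ℝ) (α : ℝ) (μ : X → A) (ν : X → ℝ) : X → ℝ :=
  fun x => (1 - α) * ∑ x0, ν x0 * deltaMat P α μ x0 x

/-- Cost-to-go of policy μ: Σ_t α^t P_μ^t g_μ. -/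
def Jpol {X A : Type*} [Fintype X] [DecidableEq X]
    (g : X → A → ℝ) (P : A → X → X → ℝ) (α : ℝ) (μ : X → A) : X → ℝ :=
  fun x => ∑' t : ℕ, α ^ t * (((polMat P μ) ^ t) *ᵥ (fun y => g y (μ y))) x

/-- Linear combination of basis functions. -/
def phiR {X : Type*} {K : ℕ} (Φ : X → Fin K → ℝ) (r : Fin K → ℝ) : X → ℝ :=
  fun x => ∑ i, Φ x i * r i

/-- ν-weighted 1-norm. -/
def wnorm1 {X : Type*} [Fintype X] (ν J : X → ℝ) : ℝ := ∑ x, ν x * |J x|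

/-- Max norm. -/
def supNorm {X : Type*} [Fintype X] [Nonempty X] (J : X → ℝ) : ℝ :=
  Finset.univ.sup' Finset.univ_nonempty fun x => |J x|

/-- ψ-weighted max norm ‖J‖_{∞,1/ψ}. -/
def wsupNorm {X : Type*} [Fintype X] [Nonempty X] (ψ J : X → ℝ) : ℝ :=
  Finset.univ.sup' Finset.univ_nonempty fun x => |J x| / ψ x

/-- β(ψ) = max_{x,a} (Σ_{x'} P_a(x,x') ψ(x')) / ψ(x). -/
def betaPsi {X A : Type*} [Fintype X] [Nonempty X] [Fintype A] [Nonempty A]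
    (P : A → X → X → ℝ) (ψ : X → ℝ) : ℝ :=
  Finset.univ.sup' Finset.univ_nonempty fun p : X × A => (∑ x', P p.2 p.1 x' * ψ x') / ψ p.1

/-- Feasible values of the LP defining ℓ(r,θ). -/
def ellSet {X A : Type*} [Fintype X] [Fintype A] [Nonempty A] {K : ℕ}
    (g : X → A → ℝ) (P : A → X → X → ℝ) (α : ℝ) (π : X → ℝ)
    (Φ : X → Fin K → ℝ) (r : Fin K → ℝ) (θ : ℝ) : Set ℝ :=
  {v | ∃ (s : X → ℝ) (γ : ℝ), v = γ / (1 - α) ∧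
    (∀ x, phiR Φ r x - bellmanT g P α (phiR Φ r) x ≤ s x + γ) ∧
    (∑ x, π x * s x ≤ θ) ∧ (∀ x, 0 ≤ s x)}

/-- ℓ(r,θ): optimal value of the LP (3.2). -/
def ellVal {X A : Type*} [Fintype X] [Fintype A] [Nonempty A] {K : ℕ}
    (g : X → A → ℝ) (P : A → X → X → ℝ) (α : ℝ) (π : X → ℝ)
    (Φ : X → Fin K → ℝ) (r : Fin K → ℝ) (θ : ℝ) : ℝ :=
  sInf (ellSet g P α π Φ r θ)

/-!
Write `Δ_μ = ∑ₖ (α P_μ)ᵏ = (I - α P_μ)⁻¹`; its entries are nonnegative because `P_μ` is stochastic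
and `α < 1`. For every `J` and every policy `μ`, `J_μ - J = Δ_μ (T_μ J - J)`. For `μ_J` and `J*`
this writes the loss as `Δ_{μ_J} w` with `w = T_{μ_J} J* - J* ≥ 0`, so its `η`-weighted 1-norm is
the linear quantity `q ⬝ w`, where `q = η Δ_{μ_J}`. Greediness of `μ_J` and optimality of `μ*` give
`w ≤ α P_{μ_J} (J* - J) + α P_{μ*} (J - J*)`, and for `μ*` the same identity gives
`J - J* ≤ Δ_{μ*} (J - TJ)⁺`. Then `q α P_{μ_J} = q - η`, `η ≤ q` and `α P_{μ*} Δ_{μ*} = Δ_{μ*} - I`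
bound `q ⬝ w` by `q ⬝ (J* - J) + 2 q Δ_{μ*} (J - TJ)⁺`, which is the right-hand side since
`ν(η, J) = (1 - α) q`.
-/

namespace Matrix

variable {n : Type*} [Fintype n]

theorem mulVec_mono_of_nonneg {B : Matrix n n ℝ} (hB : ∀ i j, 0 ≤ B i j) {u v : n → ℝ}
    (huv : u ≤ v) : B *ᵥ u ≤ B *ᵥ v :=
  fun i => dotProduct_le_dotProduct_of_nonneg_left huv (hB i)

theorem mulVec_nonneg_of_nonneg {B : Matrix n n ℝ} (hB : ∀ i j, 0 ≤ B i j) {v : n → ℝ}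
    (hv : 0 ≤ v) : 0 ≤ B *ᵥ v := by
  simpa using mulVec_mono_of_nonneg hB hv

theorem vecMul_nonneg_of_nonneg {B : Matrix n n ℝ} (hB : ∀ i j, 0 ≤ B i j) {v : n → ℝ}
    (hv : 0 ≤ v) : 0 ≤ v ᵥ* B :=
  fun j => Finset.sum_nonneg fun i _ => mul_nonneg (hv i) (hB i j)

variable [DecidableEq n] {M : Matrix n n ℝ} {α : ℝ}

theorem summable_smul_pow_of_mem_rowStochastic (hM : M ∈ rowStochastic ℝ n) (hα0 : 0 ≤ α)
    (hα1 : α < 1) : Summable fun k : ℕ => (α • M) ^ k := by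
  refine Pi.summable.2 fun i => Pi.summable.2 fun j => ?_
  refine .of_nonneg_of_le (fun k => ?_) (fun k => ?_) (summable_geometric_of_lt_one hα0 hα1)
  all_goals simp only [smul_pow, smul_apply, smul_eq_mul]
  · exact mul_nonneg (pow_nonneg hα0 k) (nonneg_of_mem_rowStochastic (pow_mem hM k))
  · exact mul_le_of_le_one_right (pow_nonneg hα0 k) (le_one_of_mem_rowStochastic (pow_mem hM k))

theorem tsum_smul_pow_apply_nonneg (hM : M ∈ rowStochastic ℝ n) (hα0 : 0 ≤ α) (hα1 : α < 1)
    (i j : n) : 0 ≤ (∑' k : ℕ, (α • M) ^ k) i j := by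
  change 0 ≤ entryAddMonoidHom ℝ i j (∑' k : ℕ, (α • M) ^ k)
  rw [(summable_smul_pow_of_mem_rowStochastic hM hα0 hα1).map_tsum _
    (continuous_id.matrix_elem i j)]
  refine tsum_nonneg fun k => ?_
  simp only [entryAddMonoidHom_apply, smul_pow, smul_apply, smul_eq_mul]
  exact mul_nonneg (pow_nonneg hα0 k) (nonneg_of_mem_rowStochastic (pow_mem hM k))

end Matrix

section PolicyEvaluation

variable {X A : Type*} [Fintype X] {g : X → A → ℝ} {P : A → X → X → ℝ} {α : ℝ} {μ : X → A}

theorem polT_eq (J : X → ℝ) :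
    polT g P α μ J = (fun x => g x (μ x)) + (α • polMat P μ) *ᵥ J := by
  ext x
  simp [polT, polMat, mulVec, dotProduct, Finset.mul_sum, mul_assoc]

theorem polT_sub_polT (u v : X → ℝ) :
    polT g P α μ u - polT g P α μ v = (α • polMat P μ) *ᵥ (u - v) := by
  rw [polT_eq, polT_eq, mulVec_sub]
  abel

theorem bellmanT_le_polT [Fintype A] [Nonempty A] (J : X → ℝ) :
    bellmanT g P α J ≤ polT g P α μ J :=
  fun x => Finset.inf'_le _ (Finset.mem_univ (μ x))

theorem wnorm1_eq_dotProduct (η : X → ℝ) {v : X → ℝ} (hv : 0 ≤ v) : wnorm1 η v = η ⬝ᵥ v :=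
  Finset.sum_congr rfl fun x _ => by rw [abs_of_nonneg (hv x)]

variable [DecidableEq X]

theorem polMat_mem_rowStochastic (hP0 : ∀ a x x', 0 ≤ P a x x')
    (hP1 : ∀ a x, ∑ x', P a x x' = 1) (μ : X → A) : polMat P μ ∈ rowStochastic ℝ X :=
  mem_rowStochastic_iff_sum.2 ⟨fun x x' => hP0 _ x x', fun x => hP1 _ x⟩

theorem piDist_eq_smul_vecMul (ν : X → ℝ) :
    piDist P α μ ν = (1 - α) • (ν ᵥ* deltaMat P α μ) := by
  ext x
  simp [piDist, vecMul, dotProduct]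

variable (hM : polMat P μ ∈ rowStochastic ℝ X) (hα0 : 0 ≤ α) (hα1 : α < 1)

include hM hα0 hα1

theorem deltaMat_mul_one_sub : deltaMat P α μ * (1 - α • polMat P μ) = 1 :=
  (summable_smul_pow_of_mem_rowStochastic hM hα0 hα1).tsum_pow_mul_one_sub

theorem one_sub_mul_deltaMat : (1 - α • polMat P μ) * deltaMat P α μ = 1 :=
  (summable_smul_pow_of_mem_rowStochastic hM hα0 hα1).one_sub_mul_tsum_pow

theorem deltaMat_nonneg (x x' : X) : 0 ≤ deltaMat P α μ x x' :=
  tsum_smul_pow_apply_nonneg hM hα0 hα1 x x'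

theorem vecMul_deltaMat_vecMul_smul_polMat (v : X → ℝ) :
    v ᵥ* deltaMat P α μ ᵥ* (α • polMat P μ) = v ᵥ* deltaMat P α μ - v := by
  have h := congrArg (v ᵥ* ·) (deltaMat_mul_one_sub hM hα0 hα1)
  simp only [← vecMul_vecMul, vecMul_sub, vecMul_one] at h
  linear_combination -h

theorem smul_polMat_mulVec_deltaMat_mulVec (v : X → ℝ) :
    (α • polMat P μ) *ᵥ (deltaMat P α μ *ᵥ v) = deltaMat P α μ *ᵥ v - v := by
  have h := congrArg (· *ᵥ v) (one_sub_mul_deltaMat hM hα0 hα1)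
  simp only [← mulVec_mulVec, sub_mulVec, one_mulVec] at h
  linear_combination -h

theorem Jpol_eq_deltaMat_mulVec (g : X → A → ℝ) :
    Jpol g P α μ = deltaMat P α μ *ᵥ fun x => g x (μ x) := by
  ext x
  have h := (summable_smul_pow_of_mem_rowStochastic hM hα0 hα1).map_tsum
    ((Pi.evalAddMonoidHom _ x).comp (mulVec.addMonoidHomLeft fun x => g x (μ x)))
    ((continuous_apply x).comp (continuous_id.matrix_mulVec continuous_const))
  simpa [Jpol, deltaMat, smul_pow, smul_mulVec] using h.symm

theorem Jpol_sub_eq_deltaMat_mulVec (J : X → ℝ) :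
    Jpol g P α μ - J = deltaMat P α μ *ᵥ (polT g P α μ J - J) := by
  have hTJ : polT g P α μ J - J = (fun x => g x (μ x)) - (1 - α • polMat P μ) *ᵥ J := by
    rw [polT_eq, sub_mulVec, one_mulVec]
    abel
  rw [hTJ, mulVec_sub, mulVec_mulVec, deltaMat_mul_one_sub hM hα0 hα1, one_mulVec,
    Jpol_eq_deltaMat_mulVec hM hα0 hα1]

theorem Jpol_eq_of_polT_eq {J : X → ℝ} (hJ : polT g P α μ J = J) : Jpol g P α μ = J := by
  have h := Jpol_sub_eq_deltaMat_mulVec (g := g) hM hα0 hα1 J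
  rwa [hJ, sub_self, mulVec_zero, sub_eq_zero] at h

theorem sub_le_deltaMat_mulVec_posPart [Fintype A] [Nonempty A] {Jμ : X → ℝ}
    (hJμ : polT g P α μ Jμ = Jμ) (J : X → ℝ) :
    J - Jμ ≤ deltaMat P α μ *ᵥ fun x => max (J x - bellmanT g P α J x) 0 := by
  have h : J - Jμ = deltaMat P α μ *ᵥ (J - polT g P α μ J) := by
    rw [← Jpol_eq_of_polT_eq hM hα0 hα1 hJμ, ← neg_sub, Jpol_sub_eq_deltaMat_mulVec hM hα0 hα1,
      ← mulVec_neg, neg_sub]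
  rw [h]
  exact mulVec_mono_of_nonneg (deltaMat_nonneg hM hα0 hα1) fun x =>
    (sub_le_sub_left (bellmanT_le_polT J x) _).trans (le_max_left _ _)

end PolicyEvaluation

section GreedyPolicy

variable {X A : Type*} [Fintype X] [Fintype A] [Nonempty A] {g : X → A → ℝ}
  {P : A → X → X → ℝ} {α : ℝ} {J Js : X → ℝ} {μJ μs : X → A}

theorem polT_sub_le_of_greedy (hμJ : polT g P α μJ J = bellmanT g P α J)
    (hμs : polT g P α μs Js = Js) :
    polT g P α μJ Js - Js ≤ (α • polMat P μJ) *ᵥ (Js - J) + (α • polMat P μs) *ᵥ (J - Js) := by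
  rw [← polT_sub_polT (g := g), ← polT_sub_polT (g := g)]
  intro x
  have h : bellmanT g P α J x ≤ polT g P α μs J x := bellmanT_le_polT J x
  simp only [Pi.sub_apply, Pi.add_apply]
  linarith [congrFun hμJ x, congrFun hμs x]

theorem wnorm1_Jpol_sub_le [DecidableEq X] (hP : ∀ μ, polMat P μ ∈ rowStochastic ℝ X)
    (hα0 : 0 ≤ α) (hα1 : α < 1) (hJs : bellmanT g P α Js = Js) (hμs : polT g P α μs Js = Js)
    (hμJ : polT g P α μJ J = bellmanT g P α J) {η : X → ℝ} (hη : 0 ≤ η) :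
    wnorm1 η (Jpol g P α μJ - Js) ≤
      (η ᵥ* deltaMat P α μJ) ⬝ᵥ (Js - J) + 2 * ((η ᵥ* deltaMat P α μJ) ⬝ᵥ
        (deltaMat P α μs *ᵥ fun x => max (J x - bellmanT g P α J x) 0)) := by
  set s : X → ℝ := fun x => max (J x - bellmanT g P α J x) 0
  set q := η ᵥ* deltaMat P α μJ
  set Δs := deltaMat P α μs
  have hαM (μ : X → A) (x x' : X) : 0 ≤ (α • polMat P μ) x x' :=
    mul_nonneg hα0 (nonneg_of_mem_rowStochastic (hP μ))
  have hq : 0 ≤ q := vecMul_nonneg_of_nonneg (deltaMat_nonneg (hP μJ) hα0 hα1) hη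
  have hqM : q ᵥ* (α • polMat P μJ) = q - η :=
    vecMul_deltaMat_vecMul_smul_polMat (hP μJ) hα0 hα1 η
  have hηq : η ≤ q := sub_nonneg.1 (hqM ▸ vecMul_nonneg_of_nonneg (hαM μJ) hq)
  have hs : 0 ≤ s := fun x => le_max_right _ _
  have hΔs : 0 ≤ Δs *ᵥ s := mulVec_nonneg_of_nonneg (deltaMat_nonneg (hP μs) hα0 hα1) hs
  have hu : J - Js ≤ Δs *ᵥ s := sub_le_deltaMat_mulVec_posPart (hP μs) hα0 hα1 hμs J
  have hgap : Jpol g P α μJ - Js = deltaMat P α μJ *ᵥ (polT g P α μJ Js - Js) :=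
    Jpol_sub_eq_deltaMat_mulVec (hP μJ) hα0 hα1 Js
  have hw : 0 ≤ polT g P α μJ Js - Js := sub_nonneg.2 (hJs.symm.le.trans (bellmanT_le_polT Js))
  have hηu : η ⬝ᵥ (J - Js) ≤ q ⬝ᵥ (Δs *ᵥ s) :=
    (dotProduct_le_dotProduct_of_nonneg_left hu hη).trans
      (dotProduct_le_dotProduct_of_nonneg_right hηq hΔs)
  have hMu : q ⬝ᵥ ((α • polMat P μs) *ᵥ (J - Js)) ≤ q ⬝ᵥ (Δs *ᵥ s) := by
    have h := dotProduct_le_dotProduct_of_nonneg_left (mulVec_mono_of_nonneg (hαM μs) hu) hq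
    rw [smul_polMat_mulVec_deltaMat_mulVec (hP μs) hα0 hα1, dotProduct_sub] at h
    linarith [dotProduct_nonneg_of_nonneg hq hs]
  calc wnorm1 η (Jpol g P α μJ - Js) = q ⬝ᵥ (polT g P α μJ Js - Js) := by
        rw [wnorm1_eq_dotProduct η (hgap ▸ mulVec_nonneg_of_nonneg
          (deltaMat_nonneg (hP μJ) hα0 hα1) hw), hgap, dotProduct_mulVec]
    _ ≤ q ⬝ᵥ ((α • polMat P μJ) *ᵥ (Js - J)) + q ⬝ᵥ ((α • polMat P μs) *ᵥ (J - Js)) := by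
        rw [← dotProduct_add]
        exact dotProduct_le_dotProduct_of_nonneg_left (polT_sub_le_of_greedy hμJ hμs) hq
    _ = q ⬝ᵥ (Js - J) + η ⬝ᵥ (J - Js) + q ⬝ᵥ ((α • polMat P μs) *ᵥ (J - Js)) := by
        rw [dotProduct_mulVec, hqM, sub_dotProduct, dotProduct_sub η J, dotProduct_sub η Js]
        ring
    _ ≤ q ⬝ᵥ (Js - J) + 2 * (q ⬝ᵥ (Δs *ᵥ s)) := by linarith

end GreedyPolicy

theorem salp_performance_bound_general
    {X A : Type*} [Fintype X] [Fintype A] [Nonempty A] [DecidableEq X]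
    (g : X → A → ℝ) (P : A → X → X → ℝ) (α : ℝ)
    (hα0 : 0 < α) (hα1 : α < 1)
    (hP0 : ∀ a x x', 0 ≤ P a x x') (hP1 : ∀ a x, ∑ x', P a x x' = 1)
    (Jstar : X → ℝ) (hJstar : bellmanT g P α Jstar = Jstar)
    (μs : X → A) (hμs : polT g P α μs Jstar = bellmanT g P α Jstar)
    (J : X → ℝ) (μJ : X → A) (hμJ : polT g P α μJ J = bellmanT g P α J)
    (η : X → ℝ) (hη0 : ∀ x, 0 ≤ η x) :
    wnorm1 η (fun x => Jpol g P α μJ x - Jstar x) ≤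
      (1 / (1 - α)) *
        ((∑ x, piDist P α μJ η x * (Jstar x - J x)) +
          (2 / (1 - α)) *
            ∑ x, piDist P α μs (piDist P α μJ η) x * max (J x - bellmanT g P α J x) 0) := by
  have h1α : 1 - α ≠ 0 := sub_ne_zero.2 hα1.ne'
  refine (wnorm1_Jpol_sub_le (polMat_mem_rowStochastic hP0 hP1) hα0.le hα1 hJstar
    (hμs.trans hJstar) hμJ hη0).trans_eq ?_
  change _ = 1 / (1 - α) * (piDist P α μJ η ⬝ᵥ (Jstar - J) +
    2 / (1 - α) * (piDist P α μs (piDist P α μJ η) ⬝ᵥ fun x => max (J x - bellmanT g P α J x) 0))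
  rw [piDist_eq_smul_vecMul, piDist_eq_smul_vecMul, smul_vecMul, smul_dotProduct, smul_dotProduct,
    smul_dotProduct, dotProduct_mulVec, smul_eq_mul, smul_eq_mul, smul_eq_mul]
  field_simp

/-- Theorem 3, performance bound: for any J and initial distribution η,
‖J_{μ_J} - J*‖_{1,η} ≤ (1/(1-α)) (ν(η,J)^⊤(J* - J) + (2/(1-α)) π_{μ*,ν(η,J)}^⊤ (J - TJ)^+),
where ν(η,J)^⊤ = (1-α) η^⊤ Δ_{μ_J}. -/
theorem salp_performance_bound
    {X A : Type*} [Fintype X] [Nonempty X] [Fintype A] [Nonempty A] [DecidableEq X]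
    (g : X → A → ℝ) (P : A → X → X → ℝ) (α : ℝ)
    (hα0 : 0 < α) (hα1 : α < 1)
    (hP0 : ∀ a x x', 0 ≤ P a x x') (hP1 : ∀ a x, ∑ x', P a x x' = 1)
    (Jstar : X → ℝ) (hJstar : bellmanT g P α Jstar = Jstar)
    (μs : X → A) (hμs : polT g P α μs Jstar = bellmanT g P α Jstar)
    (J : X → ℝ) (μJ : X → A) (hμJ : polT g P α μJ J = bellmanT g P α J)
    (η : X → ℝ) (hη0 : ∀ x, 0 ≤ η x) (hη1 : ∑ x, η x = 1) :
    wnorm1 η (fun x => Jpol g P α μJ x - Jstar x) ≤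
      (1 / (1 - α)) *
        ((∑ x, piDist P α μJ η x * (Jstar x - J x)) +
          (2 / (1 - α)) *
            ∑ x, piDist P α μs (piDist P α μJ η) x * max (J x - bellmanT g P α J x) 0) :=
  salp_performance_bound_general g P α hα0 hα1 hP0 hP1 Jstar hJstar μs hμs J μJ hμJ η hη0
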